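/- arXiv:1206.6216 — 3 statements merged into one kernel-verified Lean document; each statement's English description precedes it below -/
import Mathlib

section
/- Let μ be a finite Borel measure on S² with μ(S² \ {e₃, −e₃}) > 0. Then the function τ ↦ ∫_{S²} ⟨G_τ(p), e₃⟩ dμ(p) is strictly decreasing on (0, ∞). -/
/-!
STATEMENT 6: Let μ be a finite Borel measure on S² with μ(S² \ {e₃, −e₃}) > 0.
Then `τ ↦ ∫_{S²} ⟨G_τ(p), e₃⟩ dμ(p)` is strictly decreasing on (0,∞).
-/

noncomputable section

open Metric MeasureTheory
open scoped RealInnerProductSpace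

/-- ℝ³ with the Euclidean norm. -/
abbrev E3 : Type := EuclideanSpace ℝ (Fin 3)

/-- Constructor for points of ℝ³. -/
def mk3 (a b c : ℝ) : E3 := (WithLp.equiv 2 (Fin 3 → ℝ)).symm ![a, b, c]

/-- The north pole `e₃ = (0,0,1)`. -/
def e3 : E3 := mk3 0 0 1

/-- The proper conformal transformation `G_τ` of the sphere. -/
def Gmap (τ : ℝ) (p : E3) : E3 :=
  ((1 + p 2) + τ ^ 2 * (1 - p 2))⁻¹ •
    mk3 (2 * τ * p 0) (2 * τ * p 1) ((1 + p 2) - τ ^ 2 * (1 - p 2))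

/-!
The height of `G_τ p` depends only on the height `z = ⟪p, e₃⟫` of `p`, and equals
`2(1+z)/((1+z)+τ²(1-z)) - 1`. For `z ∈ [-1, 1]` this is antitone in `τ > 0`, and strictly so for
`z ∈ (-1, 1)`, i.e. away from the poles `±e₃`. Integrating, the positive mass of `μ` off the poles
makes the decrease of the integral strict.
-/

theorem MeasureTheory.integral_lt_integral_of_le_of_forall_mem_lt {α : Type*} [MeasurableSpace α]
    {μ : Measure α} {f g : α → ℝ} (hf : Integrable f μ) (hg : Integrable g μ)
    (hle : ∀ x, f x ≤ g x) {s : Set α} (hs : 0 < μ s) (hlt : ∀ x ∈ s, f x < g x) :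
    ∫ x, f x ∂μ < ∫ x, g x ∂μ := by
  rw [← sub_pos, ← integral_sub hg hf,
    integral_pos_iff_support_of_nonneg (fun x => sub_nonneg.2 (hle x)) (hg.sub hf)]
  exact hs.trans_le (measure_mono fun x hx => (sub_pos.2 (hlt x hx)).ne')

def dilateHeight (τ z : ℝ) : ℝ := ((1 + z) - τ ^ 2 * (1 - z)) / ((1 + z) + τ ^ 2 * (1 - z))

lemma dilateHeight_eq_sub_one {τ z : ℝ} (h : (1 + z) + τ ^ 2 * (1 - z) ≠ 0) :
    dilateHeight τ z = 2 * (1 + z) / ((1 + z) + τ ^ 2 * (1 - z)) - 1 := by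
  rw [dilateHeight]; field_simp; ring

lemma dilateHeight_denom_pos {τ z : ℝ} (hτ : 0 < τ) (hz : z ∈ Set.Icc (-1) 1) :
    0 < (1 + z) + τ ^ 2 * (1 - z) := by
  obtain ⟨h₁, h₂⟩ := hz
  rcases h₁.eq_or_lt with rfl | h₁
  · nlinarith [pow_pos hτ 2]
  · nlinarith [mul_nonneg (sq_nonneg τ) (sub_nonneg.2 h₂)]

lemma dilateHeight_le_dilateHeight {s t z : ℝ} (hz : z ∈ Set.Icc (-1) 1) (hs : 0 < s)
    (hst : s ≤ t) : dilateHeight t z ≤ dilateHeight s z := by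
  have hDs := dilateHeight_denom_pos hs hz
  have hDt := dilateHeight_denom_pos (hs.trans_le hst) hz
  rw [dilateHeight_eq_sub_one hDs.ne', dilateHeight_eq_sub_one hDt.ne']
  have : 0 ≤ 1 + z := by linarith [hz.1]
  have : 0 ≤ 1 - z := by linarith [hz.2]
  gcongr

lemma dilateHeight_lt_dilateHeight {s t z : ℝ} (hz : z ∈ Set.Ioo (-1) 1) (hs : 0 < s)
    (hst : s < t) : dilateHeight t z < dilateHeight s z := by
  have hDs := dilateHeight_denom_pos hs (Set.Ioo_subset_Icc_self hz)
  have hDt := dilateHeight_denom_pos (hs.trans hst) (Set.Ioo_subset_Icc_self hz)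
  rw [dilateHeight_eq_sub_one hDs.ne', dilateHeight_eq_sub_one hDt.ne']
  have : 0 < 1 + z := by linarith [hz.1]
  have : 0 < 1 - z := by linarith [hz.2]
  gcongr

lemma norm_e3 : ‖e3‖ = 1 := by
  simp [e3, mk3, EuclideanSpace.norm_eq, Fin.sum_univ_three]

lemma inner_e3 (p : E3) : ⟪p, e3⟫ = p 2 := by
  simp [e3, mk3, PiLp.inner_apply, Fin.sum_univ_three]

lemma inner_Gmap_e3 (τ : ℝ) (p : E3) : ⟪Gmap τ p, e3⟫ = dilateHeight τ ⟪p, e3⟫ := by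
  simp [inner_e3, Gmap, mk3, dilateHeight, div_eq_inv_mul]

lemma inner_e3_mem_Ioo {p : E3} (hp : ‖p‖ = 1) (h₁ : p ≠ e3) (h₂ : p ≠ -e3) :
    ⟪p, e3⟫ ∈ Set.Ioo (-1) 1 := by
  obtain ⟨hl, hu⟩ := real_inner_mem_Icc_of_norm_eq_one hp norm_e3
  exact ⟨hl.lt_of_ne (fun h => h₂ ((inner_eq_neg_one_iff_of_norm_eq_one hp norm_e3).1 h.symm)),
    hu.lt_of_ne (fun h => h₁ ((inner_eq_one_iff_of_norm_eq_one hp norm_e3).1 h))⟩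

lemma continuous_dilateHeight_inner_e3 {τ : ℝ} (hτ : 0 < τ) :
    Continuous fun p : sphere (0 : E3) 1 => dilateHeight τ ⟪(p : E3), e3⟫ := by
  refine Continuous.div (by fun_prop) (by fun_prop) fun p => (dilateHeight_denom_pos hτ ?_).ne'
  exact real_inner_mem_Icc_of_norm_eq_one (norm_eq_of_mem_sphere p) norm_e3

theorem stmt_6 (μ : Measure (sphere (0 : E3) 1)) [IsFiniteMeasure μ]
    (hμ : 0 < μ {p : sphere (0 : E3) 1 | (p : E3) ≠ e3 ∧ (p : E3) ≠ -e3}) :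
    StrictAntiOn (fun τ : ℝ => ∫ p : sphere (0 : E3) 1, ⟪Gmap τ (p : E3), e3⟫ ∂μ)
      (Set.Ioi 0) := by
  intro s hs t ht hst
  simp only [inner_Gmap_e3]
  have integrable {τ : ℝ} (hτ : 0 < τ) :=
    (continuous_dilateHeight_inner_e3 hτ).integrable_of_hasCompactSupport
      (μ := μ) (HasCompactSupport.of_compactSpace _)
  refine integral_lt_integral_of_le_of_forall_mem_lt (integrable ht) (integrable hs)
    (fun p => dilateHeight_le_dilateHeight ?_ hs hst.le) hμ
    (fun p hp => dilateHeight_lt_dilateHeight (inner_e3_mem_Ioo ?_ hp.1 hp.2) hs hst)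
  · exact real_inner_mem_Icc_of_norm_eq_one (norm_eq_of_mem_sphere p) norm_e3
  · exact norm_eq_of_mem_sphere p
end
end

section
/- Let ψ : S² → ℝ be continuous and strictly positive and let σ be the round surface measure on S², normalized barycenter map B(Φ) := (∫_{S²} Φ(p) ψ(p) dσ(p)) / (∫_{S²} ψ dσ). Define 𝓕 on the closed unit ball K(0,1) ⊂ ℝ³ by: 𝓕(N) = B(F_{N/‖N‖, 1−‖N‖}) for 0 < ‖N‖ < 1; 𝓕(0) = B(id); and 𝓕(N) = N for ‖N‖ = 1. Then 𝓕 is continuous on K(0,1), maps K(0,1) into K(0,1), and restricts to the identity on the boundary sphere ‖N‖ = 1. -/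
/-!
STATEMENT 9: With ψ : S² → ℝ continuous and strictly positive, σ the round surface
measure, and the normalized barycenter map
`B(Φ) := (∫_{S²} Φ(p) ψ(p) dσ(p)) / (∫_{S²} ψ dσ)`, define 𝓕 on the closed unit
ball K(0,1) ⊂ ℝ³ by `𝓕(N) = B(F_{N/‖N‖, 1−‖N‖})` for 0 < ‖N‖ < 1, `𝓕(0) = B(id)`,
and `𝓕(N) = N` for ‖N‖ = 1.  Then 𝓕 is continuous on K(0,1), maps K(0,1) into
K(0,1), and restricts to the identity on the boundary sphere.
-/

noncomputable section
open scoped Classical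

open Metric MeasureTheory
open scoped RealInnerProductSpace

/-- The proper conformal transformation `F_{n,τ}` of the sphere with north pole `n`:
this closed formula equals `R⁻¹ ∘ G_τ ∘ R` for any rotation `R ∈ SO(3)` with
`R n = e₃` (independently of the choice of `R`). -/
def Fmap (n : E3) (τ : ℝ) (p : E3) : E3 :=
  ((1 + ⟪p, n⟫) + τ ^ 2 * (1 - ⟪p, n⟫))⁻¹ •
    ((2 * τ) • (p - ⟪p, n⟫ • n) + ((1 + ⟪p, n⟫) - τ ^ 2 * (1 - ⟪p, n⟫)) • n)

/-- The round surface measure on the unit sphere S² ⊂ ℝ³ (total mass 4π). -/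
def sphMeasure : Measure (sphere (0 : E3) 1) :=
  (volume : Measure E3).toSphere

/-- The normalized barycenter `B(Φ)` of the measure ψ·σ pushed forward by Φ. -/
def bary (ψ : sphere (0 : E3) 1 → ℝ) (Φ : E3 → E3) : E3 :=
  (∫ p : sphere (0 : E3) 1, ψ p ∂sphMeasure)⁻¹ •
    ∫ p : sphere (0 : E3) 1, ψ p • Φ (p : E3) ∂sphMeasure

/-- The map 𝓕 on the closed unit ball. -/
def Fcal (ψ : sphere (0 : E3) 1 → ℝ) (N : E3) : E3 :=
  if ‖N‖ = 1 then N
  else if N = 0 then bary ψ id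
  else bary ψ (Fmap (‖N‖⁻¹ • N) (1 - ‖N‖))

/-!
On the closed unit ball the three branches of `𝓕` merge into `𝓕 N = bary ψ (confMap N)`.
Here `confMap N` is `F_{N/‖N‖, 1-‖N‖}` rewritten over the denominator
`confDen N p = 2(1-‖N‖)² + (2-‖N‖)(‖N‖ + ⟪p,N⟫)`; it is the identity for `N = 0`, and for
`‖N‖ = 1` it is the constant `N` except at `p = -N`, the only zero of `confDen` on
`closedBall 0 1 × S²`.  For unit `p` the numerator has norm `confDen N p`, so `‖confMap N p‖ ≤ 1`
and barycenters stay in the ball.  Away from that zero `confMap` is continuous in `N`, and points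
are `σ`-null, so dominated convergence gives the continuity of `𝓕`.
-/

section ConformalFamily

variable {V : Type*} [NormedAddCommGroup V] [InnerProductSpace ℝ V] {N p : V}

def confDen (N p : V) : ℝ := 2 - (2 - ‖N‖) * (‖N‖ - ⟪p, N⟫)

def confMap (N p : V) : V :=
  (confDen N p)⁻¹ • ((2 * (1 - ‖N‖)) • p + (2 - ‖N‖ + ⟪p, N⟫) • N)

lemma neg_norm_le_inner (hp : ‖p‖ ≤ 1) : -‖N‖ ≤ ⟪p, N⟫ :=
  (neg_le_neg (mul_le_of_le_one_left (norm_nonneg N) hp)).trans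
    (neg_le_of_abs_le (abs_real_inner_le_norm p N))

lemma two_mul_sq_le_confDen (hN : ‖N‖ ≤ 2) (hp : ‖p‖ ≤ 1) :
    2 * (1 - ‖N‖) ^ 2 ≤ confDen N p := by
  have hsum : 0 ≤ ‖N‖ + ⟪p, N⟫ := by linarith [neg_norm_le_inner (N := N) hp]
  have : confDen N p = 2 * (1 - ‖N‖) ^ 2 + (2 - ‖N‖) * (‖N‖ + ⟪p, N⟫) := by
    rw [confDen]; ring
  rw [this]
  exact le_add_of_nonneg_right (mul_nonneg (sub_nonneg.mpr hN) hsum)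

lemma confDen_nonneg (hN : ‖N‖ ≤ 1) (hp : ‖p‖ ≤ 1) : 0 ≤ confDen N p :=
  (by positivity : (0 : ℝ) ≤ 2 * (1 - ‖N‖) ^ 2).trans (two_mul_sq_le_confDen (by linarith) hp)

lemma confDen_pos (hN : ‖N‖ < 1) (hp : ‖p‖ ≤ 1) : 0 < confDen N p := by
  have : 0 < 1 - ‖N‖ := sub_pos.mpr hN
  exact (by positivity : (0 : ℝ) < 2 * (1 - ‖N‖) ^ 2).trans_le
    (two_mul_sq_le_confDen (by linarith) hp)

lemma confDen_of_norm_eq_one (hN : ‖N‖ = 1) : confDen N p = 1 + ⟪p, N⟫ := by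
  rw [confDen, hN]; ring

lemma confDen_ne_zero (hN : ‖N‖ ≤ 1) (hp : ‖p‖ = 1) (hpN : p ≠ -N) : confDen N p ≠ 0 := by
  rcases hN.lt_or_eq with hN | hN
  · exact (confDen_pos hN hp.le).ne'
  · rw [confDen_of_norm_eq_one hN]
    exact fun h => hpN ((inner_eq_neg_one_iff_of_norm_eq_one hp hN).mp
      (eq_neg_of_add_eq_zero_right h))

lemma norm_confNum (hN : ‖N‖ ≤ 1) (hp : ‖p‖ = 1) :
    ‖(2 * (1 - ‖N‖)) • p + (2 - ‖N‖ + ⟪p, N⟫) • N‖ = confDen N p := by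
  refine (sq_eq_sq₀ (norm_nonneg _) (confDen_nonneg hN hp.le)).mp ?_
  rw [← real_inner_self_eq_norm_sq]
  simp only [inner_add_add_self, real_inner_smul_left, real_inner_smul_right,
    real_inner_comm p N]
  rw [real_inner_self_eq_norm_sq p, real_inner_self_eq_norm_sq N, hp, confDen]
  ring

-- Where `confDen N p = 0` (only `‖N‖ = 1`, `p = -N`), `0⁻¹ = 0` makes `confMap N p = 0`.
lemma norm_confMap_le_one (hN : ‖N‖ ≤ 1) (hp : ‖p‖ = 1) : ‖confMap N p‖ ≤ 1 := by
  rw [confMap, norm_smul, norm_confNum hN hp, norm_inv, Real.norm_of_nonneg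
    (confDen_nonneg hN hp.le)]
  exact inv_mul_le_one

lemma confMap_zero_left (p : V) : confMap 0 p = p := by
  simp [confMap, confDen, smul_smul]

lemma confMap_of_norm_eq_one (hN : ‖N‖ = 1) (hden : confDen N p ≠ 0) : confMap N p = N := by
  rw [confDen_of_norm_eq_one hN] at hden
  rw [confMap, confDen_of_norm_eq_one hN, hN, sub_self, mul_zero, zero_smul, zero_add,
    smul_smul, show (2 : ℝ) - 1 + ⟪p, N⟫ = 1 + ⟪p, N⟫ by ring, inv_mul_cancel₀ hden, one_smul]

lemma continuousAt_confMap_left {N₀ : V} (p : V) (h : confDen N₀ p ≠ 0) :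
    ContinuousAt (fun N => confMap N p) N₀ := by
  unfold confMap confDen at *
  fun_prop (disch := exact h)

lemma measurable_confMap [MeasurableSpace V] [BorelSpace V] [SecondCountableTopology V]
    (N : V) : Measurable (confMap N) := by
  unfold confMap confDen
  fun_prop

end ConformalFamily

lemma Fmap_eq_confMap {N p : E3} (h0 : N ≠ 0) (h1 : ‖N‖ < 1) (hp : ‖p‖ = 1) :
    Fmap (‖N‖⁻¹ • N) (1 - ‖N‖) p = confMap N p := by
  have hr : ‖N‖ ≠ 0 := norm_ne_zero_iff.mpr h0
  have hd : confDen N p ≠ 0 := (confDen_pos h1 hp.le).ne'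
  rw [Fmap, confMap, real_inner_smul_right]
  unfold confDen at hd ⊢
  generalize ⟪p, N⟫ = s at hd ⊢
  generalize ‖N‖ = r at hr hd ⊢
  have he : (1 + r⁻¹ * s) + (1 - r) ^ 2 * (1 - r⁻¹ * s)
      = r⁻¹ * (r * (2 - (2 - r) * (r - s))) := by
    field_simp
    ring
  rw [he]
  match_scalars
  · field_simp
  · field_simp
    ring

lemma MeasureTheory.Measure.toSphere_singleton {E : Type*} [NormedAddCommGroup E] [NormedSpace ℝ E]
    [FiniteDimensional ℝ E] [MeasurableSpace E] [BorelSpace E] (μ : Measure E)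
    [μ.IsAddHaarMeasure] (hE : 1 < Module.finrank ℝ E) (x : sphere (0 : E) 1) :
    μ.toSphere {x} = 0 := by
  have hline : Submodule.span ℝ {(x : E)} ≠ ⊤ := by
    intro h
    have := finrank_span_le_card (R := ℝ) ({(x : E)} : Set E)
    rw [h, finrank_top, Set.toFinset_singleton, Finset.card_singleton] at this
    omega
  rw [Measure.toSphere_apply' μ (measurableSet_singleton x), Set.image_singleton]
  refine mul_eq_zero_of_right _ (measure_mono_null ?_ (Measure.addHaar_submodule μ _ hline))
  rintro _ ⟨t, -, z, rfl, rfl⟩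
  exact Submodule.smul_mem _ t (Submodule.mem_span_singleton_self _)

instance : IsFiniteMeasure sphMeasure := by unfold sphMeasure; infer_instance

instance : sphMeasure.IsOpenPosMeasure := by unfold sphMeasure; infer_instance

instance : NullSingletonClass sphMeasure :=
  ⟨fun x => Measure.toSphere_singleton (volume : Measure E3) (by simp) x⟩

lemma sphMeasure_ae_coe_ne (v : E3) : ∀ᵐ p : sphere (0 : E3) 1 ∂sphMeasure, (p : E3) ≠ v := by
  by_cases hv : v ∈ sphere (0 : E3) 1
  · filter_upwards [Measure.ae_ne sphMeasure ⟨v, hv⟩] with p hp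
    exact fun h => hp (Subtype.ext h)
  · exact Filter.Eventually.of_forall fun p h => hv (h ▸ p.2)

section Barycenter

variable {ψ : sphere (0 : E3) 1 → ℝ}

lemma integral_sphMeasure_pos (hψc : Continuous ψ) (hψpos : ∀ p, 0 < ψ p) :
    0 < ∫ p, ψ p ∂sphMeasure := by
  obtain ⟨x⟩ : Nonempty (sphere (0 : E3) 1) :=
    (NormedSpace.sphere_nonempty.mpr zero_le_one).to_subtype
  exact integral_pos_of_integrable_nonneg_nonzero hψc
    (hψc.integrable_of_hasCompactSupport (.of_compactSpace ψ)) (fun p => (hψpos p).le)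
    (hψpos x).ne'

lemma bary_eq_of_ae_eq_const {Φ : E3 → E3} {v : E3} (hI : ∫ p, ψ p ∂sphMeasure ≠ 0)
    (hΦ : ∀ᵐ p : sphere (0 : E3) 1 ∂sphMeasure, Φ p = v) : bary ψ Φ = v := by
  have hae : (fun p : sphere (0 : E3) 1 => ψ p • Φ p) =ᵐ[sphMeasure] fun p => ψ p • v :=
    hΦ.mono fun p hp => by simp only [hp]
  rw [bary, integral_congr_ae hae, integral_smul_const, smul_smul, inv_mul_cancel₀ hI, one_smul]

lemma norm_bary_le_one {Φ : E3 → E3} (hψ : Integrable ψ sphMeasure) (hψnn : ∀ p, 0 ≤ ψ p)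
    (hΦ : ∀ p ∈ sphere (0 : E3) 1, ‖Φ p‖ ≤ 1) : ‖bary ψ Φ‖ ≤ 1 := by
  have hI : 0 ≤ ∫ p, ψ p ∂sphMeasure := integral_nonneg hψnn
  have hint : ‖∫ p : sphere (0 : E3) 1, ψ p • Φ p ∂sphMeasure‖ ≤ ∫ p, ψ p ∂sphMeasure :=
    norm_integral_le_of_norm_le hψ (.of_forall fun p => by
      rw [norm_smul, Real.norm_of_nonneg (hψnn p)]
      exact mul_le_of_le_one_right (hψnn p) (hΦ p p.2))
  rw [bary, norm_smul, norm_inv, Real.norm_of_nonneg hI]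
  exact inv_mul_le_one_of_le₀ hint hI

lemma continuousOn_bary {Φ : E3 → E3 → E3} {s : Set E3} (hψ : Integrable ψ sphMeasure)
    (hmeas : ∀ N ∈ s, AEStronglyMeasurable (fun p : sphere (0 : E3) 1 => Φ N p) sphMeasure)
    (hbound : ∀ N ∈ s, ∀ p ∈ sphere (0 : E3) 1, ‖Φ N p‖ ≤ 1)
    (hcont : ∀ N₀ ∈ s, ∀ᵐ p : sphere (0 : E3) 1 ∂sphMeasure,
      ContinuousWithinAt (fun N => Φ N p) s N₀) :
    ContinuousOn (fun N => bary ψ (Φ N)) s := by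
  refine ContinuousOn.const_smul (fun N₀ hN₀ => ?_) (∫ p, ψ p ∂sphMeasure)⁻¹
  refine continuousWithinAt_of_dominated (bound := fun p => ‖ψ p‖)
    (eventually_nhdsWithin_of_forall fun N hN => hψ.aestronglyMeasurable.smul (hmeas N hN))
    (eventually_nhdsWithin_of_forall fun N hN => .of_forall fun p => ?_) hψ.norm
    ((hcont N₀ hN₀).mono fun p hp => hp.const_smul (ψ p))
  rw [norm_smul]
  exact mul_le_of_le_one_right (norm_nonneg _) (hbound N hN p p.2)

end Barycenter

lemma Fcal_eqOn_bary_confMap {ψ : sphere (0 : E3) 1 → ℝ} (hI : ∫ p, ψ p ∂sphMeasure ≠ 0) :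
    Set.EqOn (Fcal ψ) (fun N => bary ψ (confMap N)) (closedBall 0 1) := by
  intro N hN
  rw [mem_closedBall_zero_iff] at hN
  rcases hN.lt_or_eq with hN | hN
  · by_cases h0 : N = 0
    · have hid : confMap (0 : E3) = id := funext confMap_zero_left
      simp [Fcal, h0, hid]
    · simp only [Fcal, hN.ne, h0, if_false, bary]
      congr 1
      refine integral_congr_ae (.of_forall fun p => ?_)
      simp only [Fmap_eq_confMap h0 hN (norm_eq_of_mem_sphere p)]
  · rw [Fcal, if_pos hN]
    refine (bary_eq_of_ae_eq_const hI ((sphMeasure_ae_coe_ne (-N)).mono fun p hp => ?_)).symm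
    exact confMap_of_norm_eq_one hN (confDen_ne_zero hN.le (norm_eq_of_mem_sphere p) hp)

theorem stmt_9 (ψ : sphere (0 : E3) 1 → ℝ) (hψc : Continuous ψ)
    (hψpos : ∀ p, 0 < ψ p) :
    ContinuousOn (Fcal ψ) (closedBall (0 : E3) 1) ∧
    Set.MapsTo (Fcal ψ) (closedBall (0 : E3) 1) (closedBall (0 : E3) 1) ∧
    (∀ N : E3, ‖N‖ = 1 → Fcal ψ N = N) := by
  have hψ : Integrable ψ sphMeasure := hψc.integrable_of_hasCompactSupport (.of_compactSpace ψ)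
  have hEq := Fcal_eqOn_bary_confMap (integral_sphMeasure_pos hψc hψpos).ne'
  have hbound : ∀ N ∈ closedBall (0 : E3) 1, ∀ p ∈ sphere (0 : E3) 1, ‖confMap N p‖ ≤ 1 :=
    fun N hN p hp =>
      norm_confMap_le_one (mem_closedBall_zero_iff.mp hN) (norm_eq_of_mem_sphere ⟨p, hp⟩)
  refine ⟨(continuousOn_bary hψ (fun N _ => ?_) hbound fun N₀ hN₀ => ?_).congr hEq,
    fun N hN => ?_, fun N hN => if_pos hN⟩
  · exact (measurable_confMap N).comp_aemeasurable measurable_subtype_coe.aemeasurable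
      |>.aestronglyMeasurable
  · filter_upwards [sphMeasure_ae_coe_ne (-N₀)] with p hp
    exact (continuousAt_confMap_left _ (confDen_ne_zero (mem_closedBall_zero_iff.mp hN₀)
      (norm_eq_of_mem_sphere p) hp)).continuousWithinAt
  · rw [mem_closedBall_zero_iff, hEq hN]
    exact norm_bary_le_one hψ (fun p => (hψpos p).le) (hbound N hN)
end
end

section
/- (Key step in the uniqueness part of Theorem 1.) Let ψ : S² → ℝ be continuous and strictly positive with vanishing barycenter, ∫_{S²} p ψ(p) dσ(p) = 0. If τ > 0 is such that ∫_{S²} G_τ(p) ψ(p) dσ(p) = 0, then τ = 1; i.e. no nontrivial proper conformal transformation maps an equilibrated conformal factor to an equilibrated one. -/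
/-!
STATEMENT 12 (key step of the uniqueness part of Theorem 1): Let ψ : S² → ℝ be
continuous and strictly positive with vanishing barycenter
`∫_{S²} p ψ(p) dσ(p) = 0`.  If τ > 0 is such that `∫_{S²} G_τ(p) ψ(p) dσ(p) = 0`,
then τ = 1.
-/

noncomputable section

open Metric MeasureTheory

/-! Only third coordinates matter. With `z = p 2` and `D = (1 + z) + τ² (1 - z) > 0` on the
sphere, `z - G_τ(p)₃ = (τ² - 1) (1 - z²) / D`. Integrating against `ψ`, both barycenter
conditions give `(τ² - 1) ∫ ψ (1 - z²) / D dσ = 0`. That integrand is continuous, nonnegative and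
positive away from the poles, and `σ` charges every nonempty open set, so the integral is positive
and `τ² = 1`. -/

local notation "S²" => sphere (0 : E3) 1

instance inst_s12 : IsFiniteMeasure sphMeasure := by
  unfold sphMeasure; infer_instance

instance inst_s12_2 : sphMeasure.IsOpenPosMeasure := by
  unfold sphMeasure; infer_instance

lemma integrable_sphMeasure_of_continuous {F : Type*} [NormedAddCommGroup F] {f : S² → F}
    (hf : Continuous f) : Integrable f sphMeasure :=
  hf.integrable_of_hasCompactSupport (.of_compactSpace f)

lemma abs_apply_le_one_of_mem_sphere (p : S²) (i : Fin 3) : |(p : E3) i| ≤ 1 := by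
  simpa [← Real.norm_eq_abs] using PiLp.norm_apply_le (p : E3) i

lemma integral_smul_apply {X : Type*} [MeasurableSpace X] {μ : Measure X} {g : X → ℝ}
    {f : X → E3} (hgf : Integrable (fun x => g x • f x) μ) (i : Fin 3) :
    ∫ x, g x * f x i ∂μ = (∫ x, g x • f x ∂μ) i := by
  simpa using (EuclideanSpace.proj i : E3 →L[ℝ] ℝ).integral_comp_comm hgf

@[fun_prop]
lemma continuous_mk3 {X : Type*} [TopologicalSpace X] {f g h : X → ℝ} (hf : Continuous f)
    (hg : Continuous g) (hh : Continuous h) : Continuous fun x => mk3 (f x) (g x) (h x) :=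
  (PiLp.continuous_toLp 2 _).comp (by fun_prop)

def gmapDenom (τ : ℝ) (p : E3) : ℝ := (1 + p 2) + τ ^ 2 * (1 - p 2)

lemma gmapDenom_pos {τ : ℝ} (hτ : 0 < τ) {p : E3} (hp : |p 2| ≤ 1) : 0 < gmapDenom τ p := by
  obtain ⟨h₁, h₂⟩ := abs_le.mp hp
  unfold gmapDenom
  nlinarith [mul_nonneg (sq_nonneg τ) (sub_nonneg.2 h₂), sq_pos_of_pos hτ]

lemma gmapDenom_pos_of_mem_sphere {τ : ℝ} (hτ : 0 < τ) (p : S²) : 0 < gmapDenom τ p :=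
  gmapDenom_pos hτ (abs_apply_le_one_of_mem_sphere p 2)

lemma continuous_Gmap_sphere {τ : ℝ} (hτ : 0 < τ) : Continuous fun p : S² => Gmap τ p := by
  unfold Gmap
  fun_prop (disch := intro p; exact (gmapDenom_pos_of_mem_sphere hτ p).ne')

lemma sub_Gmap_apply_two {τ : ℝ} {p : E3} (hD : gmapDenom τ p ≠ 0) :
    p 2 - Gmap τ p 2 = (τ ^ 2 - 1) * ((1 - p 2 ^ 2) / gmapDenom τ p) := by
  simp only [Gmap, mk3, PiLp.smul_apply, smul_eq_mul] at hD ⊢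
  unfold gmapDenom at hD ⊢
  simp only [Fin.isValue, WithLp.equiv_symm_apply, Matrix.cons_val]
  field_simp
  ring

lemma integral_mul_weight_pos {ψ : S² → ℝ} (hψc : Continuous ψ) (hψpos : ∀ p, 0 < ψ p)
    {τ : ℝ} (hτ : 0 < τ) :
    0 < ∫ p : S², ψ p * ((1 - (p : E3) 2 ^ 2) / gmapDenom τ p) ∂sphMeasure := by
  have hD := gmapDenom_pos_of_mem_sphere hτ
  have hcont : Continuous fun p : S² => ψ p * ((1 - (p : E3) 2 ^ 2) / gmapDenom τ p) :=
    hψc.mul (by unfold gmapDenom at hD ⊢; fun_prop (disch := exact fun p => (hD p).ne'))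
  have hnonneg : ∀ p : S², 0 ≤ 1 - (p : E3) 2 ^ 2 := fun p => by
    nlinarith [abs_le.mp (abs_apply_le_one_of_mem_sphere p 2)]
  let e₁ : S² := ⟨EuclideanSpace.single 0 1, by simp⟩
  refine integral_pos_of_integrable_nonneg_nonzero (x := e₁) hcont
    (integrable_sphMeasure_of_continuous hcont)
    (fun p => mul_nonneg (hψpos p).le (div_nonneg (hnonneg p) (hD p).le)) ?_
  exact mul_ne_zero (hψpos e₁).ne' (by simpa [e₁] using (hD e₁).ne')

theorem stmt_12 (ψ : sphere (0 : E3) 1 → ℝ) (hψc : Continuous ψ)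
    (hψpos : ∀ p, 0 < ψ p)
    (hbar : ∫ p : sphere (0 : E3) 1, ψ p • (p : E3) ∂sphMeasure = 0)
    (τ : ℝ) (hτ : 0 < τ)
    (hbarτ : ∫ p : sphere (0 : E3) 1, ψ p • Gmap τ (p : E3) ∂sphMeasure = 0) :
    τ = 1 := by
  have hG := continuous_Gmap_sphere hτ
  have hG₂ : Continuous fun p : S² => Gmap τ p 2 := (PiLp.continuous_apply 2 _ 2).comp hG
  have hz : ∫ p : S², ψ p * (p : E3) 2 ∂sphMeasure = 0 := by
    rw [integral_smul_apply (integrable_sphMeasure_of_continuous (hψc.smul continuous_subtype_val)),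
      hbar, PiLp.zero_apply]
  have hGz : ∫ p : S², ψ p * Gmap τ p 2 ∂sphMeasure = 0 := by
    rw [integral_smul_apply (integrable_sphMeasure_of_continuous (hψc.smul hG)), hbarτ,
      PiLp.zero_apply]
  have hdiff : (τ ^ 2 - 1) * ∫ p : S², ψ p * ((1 - (p : E3) 2 ^ 2) / gmapDenom τ p)
      ∂sphMeasure = 0 :=
    calc _ = ∫ p : S², (ψ p * (p : E3) 2 - ψ p * Gmap τ p 2) ∂sphMeasure := by
          rw [← integral_const_mul]
          congr 1 with p
          rw [← mul_sub, sub_Gmap_apply_two (gmapDenom_pos_of_mem_sphere hτ p).ne']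
          ring
      _ = 0 := by
          rw [integral_sub (integrable_sphMeasure_of_continuous (by fun_prop))
            (integrable_sphMeasure_of_continuous (hψc.fun_mul hG₂)), hz, hGz, sub_zero]
  have hτsq : τ ^ 2 = 1 := by
    nlinarith [mul_eq_zero.mp hdiff, integral_mul_weight_pos hψc hψpos hτ]
  nlinarith
end
end
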